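/- Let $w$ be an integer and $p_1 < p_2 < \cdots < p_n$ integers with $p_i \neq w/2$ for all $i$ (equivalently $p_i \neq w - p_i$). Set $p_0 = -\infty$, $p_{n+1} = +\infty$, and $k = \max\{0 \le i \le n : p_i < w/2\}$ (i.e. $2p_i < w$). Then the set $\bigcap_{1\le i\le n}\big([w+1-p_i,\,p_i]\cup[p_i+1,\,w-p_i]\big)$ of integers equals the interval $[\max(p_k+1,\, w+1-p_{k+1}),\, \min(w-p_k,\, p_{k+1})]$, and this interval is nonempty. -/
import Mathlib


/-- Deligne's criterion for critical values, combinatorial form. With `p 1 < ⋯ < p n`,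
`2 p i ≠ w`, and `k = max {0 ≤ i ≤ n : 2 p i < w}`, the set of integers
`⋂_{1 ≤ i ≤ n} ([w+1-p i, p i] ∪ [p i + 1, w - p i])` equals the interval
`[max (p k + 1) (w + 1 - p (k+1)), min (w - p k) (p (k+1))]` (with the conventions
`p 0 = -∞`, `p (n+1) = +∞`, encoded by guarded conditions), and this interval is nonempty. -/
theorem critical_values_interval (n : ℕ) (w : ℤ) (p : ℕ → ℤ) (k : ℕ)
    (hmono : ∀ i j, 1 ≤ i → i < j → j ≤ n → p i < p j)
    (hne : ∀ i, 1 ≤ i → i ≤ n → 2 * p i ≠ w)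
    (hk : k ≤ n)
    (hk1 : ∀ i, 1 ≤ i → i ≤ k → 2 * p i < w)
    (hk2 : ∀ i, k < i → i ≤ n → w < 2 * p i) :
    (∀ m : ℤ,
      (∀ i, 1 ≤ i → i ≤ n →
        (w + 1 - p i ≤ m ∧ m ≤ p i) ∨ (p i + 1 ≤ m ∧ m ≤ w - p i)) ↔
      ((1 ≤ k → p k + 1 ≤ m ∧ m ≤ w - p k) ∧
       (k < n → w + 1 - p (k + 1) ≤ m ∧ m ≤ p (k + 1)))) ∧
    ∃ m : ℤ, ∀ i, 1 ≤ i → i ≤ n →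
      (w + 1 - p i ≤ m ∧ m ≤ p i) ∨ (p i + 1 ≤ m ∧ m ≤ w - p i) := by
  have key : ∀ m : ℤ,
      (∀ i, 1 ≤ i → i ≤ n →
        (w + 1 - p i ≤ m ∧ m ≤ p i) ∨ (p i + 1 ≤ m ∧ m ≤ w - p i)) ↔
      ((1 ≤ k → p k + 1 ≤ m ∧ m ≤ w - p k) ∧
       (k < n → w + 1 - p (k + 1) ≤ m ∧ m ≤ p (k + 1))) := by
    intro m
    constructor
    · intro h
      constructor
      · intro hk0
        rcases h k hk0 hk with ⟨h1, h2⟩ | h'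
        · have := hk1 k hk0 le_rfl; omega
        · exact h'
      · intro hkn
        rcases h (k + 1) (by omega) (by omega) with h' | ⟨h1, h2⟩
        · exact h'
        · have := hk2 (k + 1) (by omega) (by omega); omega
    · rintro ⟨g1, g2⟩ i hi1 hin
      by_cases hik : i ≤ k
      · right
        have hg := g1 (le_trans hi1 hik)
        have hpi : p i ≤ p k := by
          rcases lt_or_eq_of_le hik with h | h
          · exact le_of_lt (hmono i k hi1 h hk)
          · rw [h]
        omega
      · left
        have hkn : k < n := by omega
        have hg := g2 hkn
        have hpi : p (k + 1) ≤ p i := by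
          rcases lt_or_eq_of_le (show k + 1 ≤ i by omega) with h | h
          · exact le_of_lt (hmono (k + 1) i (by omega) h hin)
          · rw [h]
        omega
  refine ⟨key, ?_⟩
  by_cases hk0 : 1 ≤ k
  · by_cases hkn : k < n
    · refine ⟨max (p k + 1) (w + 1 - p (k + 1)), (key _).mpr ?_⟩
      have h1 := hk1 k hk0 le_rfl
      have h2 := hk2 (k + 1) (by omega) (by omega)
      have h3 := hmono k (k + 1) hk0 (by omega) (by omega)
      exact ⟨fun _ => by omega, fun _ => by omega⟩
    · refine ⟨p k + 1, (key _).mpr ?_⟩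
      have h1 := hk1 k hk0 le_rfl
      exact ⟨fun _ => by omega, fun h => absurd h hkn⟩
  · by_cases hkn : k < n
    · refine ⟨p (k + 1), (key _).mpr ?_⟩
      have h2 := hk2 (k + 1) (by omega) (by omega)
      exact ⟨fun h => absurd h hk0, fun _ => by omega⟩
    · exact ⟨0, (key _).mpr ⟨fun h => absurd h hk0, fun h => absurd h hkn⟩⟩
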